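/- arXiv:1605.03234 — 3 statements merged into one kernel-verified Lean document; each statement's English description precedes it below -/
import Mathlib

section
/- Let ψ(x) = (1/sqrt(2π))·exp(-x²/2). For all x ∈ (0,1] and τ > 0, ψ(τx)/(τx) ≤ (1/sqrt(2π))·(1 - x²)/(τx) + x·ψ(τ)/τ. -/
/-! After multiplying by `τ * x`, the claim is `exp (-(τ x)² / 2) ≤ 1 - x² + x² exp (-τ² / 2)`,
which is Bernoulli's inequality `(1 + h) ^ p ≤ 1 + p h` for `p = x² ∈ [0, 1]` and
`h = exp (-τ² / 2) - 1 ≥ -1`. -/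

open Real

theorem Real.exp_mul_le_one_add_mul_exp_sub_one {t : ℝ} (ht0 : 0 ≤ t) (ht1 : t ≤ 1) (a : ℝ) :
    exp (a * t) ≤ 1 + t * (exp a - 1) := by
  have hbernoulli := rpow_one_add_le_one_add_mul_self
    (by linarith [exp_pos a] : -1 ≤ exp a - 1) ht0 ht1
  rwa [add_sub_cancel, ← exp_mul] at hbernoulli

theorem Real.exp_neg_mul_sq_div_two_le {x : ℝ} (hx : x ^ 2 ≤ 1) (τ : ℝ) :
    exp (-(τ * x) ^ 2 / 2) ≤ 1 - x ^ 2 + x ^ 2 * exp (-τ ^ 2 / 2) := by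
  have h := exp_mul_le_one_add_mul_exp_sub_one (sq_nonneg x) hx (-τ ^ 2 / 2)
  rw [show -τ ^ 2 / 2 * x ^ 2 = -(τ * x) ^ 2 / 2 by ring] at h
  linarith

theorem stmt_2 (ψ : ℝ → ℝ)
    (hψ : ∀ x : ℝ, ψ x = (1 / Real.sqrt (2 * π)) * Real.exp (-x ^ 2 / 2))
    (x τ : ℝ) (hx0 : 0 < x) (hx1 : x ≤ 1) (hτ : 0 < τ) :
    ψ (τ * x) / (τ * x) ≤
      (1 / Real.sqrt (2 * π)) * (1 - x ^ 2) / (τ * x) + x * (ψ τ / τ) := by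
  have hx2 : x ^ 2 ≤ 1 := pow_le_one₀ hx0.le hx1
  have hrhs : (1 / √(2 * π)) * (1 - x ^ 2) / (τ * x) + x * (ψ τ / τ) =
      (1 / √(2 * π)) * (1 - x ^ 2 + x ^ 2 * exp (-τ ^ 2 / 2)) / (τ * x) := by
    rw [hψ]
    field_simp
  rw [hrhs, hψ]
  gcongr
  exact exp_neg_mul_sq_div_two_le hx2 τ
end

section
/- Let w_0, …, w_J be positive reals, z_0 ≤ z_1 ≤ … ≤ z_J reals, x a real number, λ, L > 0, and l ∈ {-1, 0, …, J} (with the conventions z_{-1} = -∞, z_{J+1} = +∞). Define s_l = ∑_{j=0}^J w_j·σ_{l,j} where σ_{l,j} = -1 if l < j and σ_{l,j} = +1 otherwise. If z_l + (λ/L)·s_l < x < z_{l+1} + (λ/L)·s_l, then the unique minimizer of h(v) = (λ/L)·∑_{j=0}^J w_j·|v - z_j| + (1/2)·(v - x)² is v* = x - (λ/L)·s_l, and moreover z_l < v* < z_{l+1}. -/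
/-!
On the interval `(z_l, z_{l+1})` every term `|v - z_j|` is affine, with slope `σ_{l,j}`, so
`(λ/L) s_l` is a subgradient of `g(v) = (λ/L) ∑ w_j |v - z_j|` at `v* = x - (λ/L) s_l`, provided
`v*` lies in that interval, which is exactly the hypothesis on `x`. A subgradient `m` of `g` at
`x - m` makes `x - m` the strict minimiser of `g + ½ (· - x)²`: the subgradient inequality leaves
the excess `½ (v - (x - m))²`.
-/

open Finset

theorem strict_prox_of_subgradient {f : ℝ → ℝ} {x m : ℝ}
    (hsub : ∀ v, f (x - m) + m * (v - (x - m)) ≤ f v) (v : ℝ) (hv : v ≠ x - m) :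
    f (x - m) + 1 / 2 * ((x - m) - x) ^ 2 < f v + 1 / 2 * (v - x) ^ 2 := by
  have hpos : 0 < (v - (x - m)) ^ 2 := sq_pos_of_ne_zero (sub_ne_zero.mpr hv)
  have key : 1 / 2 * (v - x) ^ 2 =
      1 / 2 * ((x - m) - x) ^ 2 - m * (v - (x - m)) + 1 / 2 * (v - (x - m)) ^ 2 := by ring
  linarith [hsub v]

theorem abs_sub_add_mul_le {σ u v z : ℝ} (hσ : |σ| ≤ 1) (hu : σ * (u - z) = |u - z|) :
    |u - z| + σ * (v - u) ≤ |v - z| :=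
  calc |u - z| + σ * (v - u) = σ * (v - z) := by rw [← hu]; ring
    _ ≤ |σ * (v - z)| := le_abs_self _
    _ = |σ| * |v - z| := abs_mul _ _
    _ ≤ |v - z| := mul_le_of_le_one_left (abs_nonneg _) hσ

theorem sum_mul_abs_sub_add_le {ι : Type*} (S : Finset ι) {w σ z : ι → ℝ} {u : ℝ}
    (hw : ∀ j ∈ S, 0 ≤ w j) (hσ : ∀ j ∈ S, |σ j| ≤ 1)
    (hu : ∀ j ∈ S, σ j * (u - z j) = |u - z j|) (v : ℝ) :
    ∑ j ∈ S, w j * |u - z j| + (∑ j ∈ S, w j * σ j) * (v - u) ≤ ∑ j ∈ S, w j * |v - z j| := by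
  rw [sum_mul, ← sum_add_distrib]
  refine sum_le_sum fun j hj => ?_
  calc w j * |u - z j| + w j * σ j * (v - u) = w j * (|u - z j| + σ j * (v - u)) := by ring
    _ ≤ w j * |v - z j| :=
      mul_le_mul_of_nonneg_left (abs_sub_add_mul_le (hσ j hj) (hu j hj)) (hw j hj)

theorem abs_ite_neg_one_one_le {p : Prop} [Decidable p] : |(if p then (-1 : ℝ) else 1)| ≤ 1 := by
  split_ifs <;> simp

theorem ite_mul_sub_eq_abs {J : ℕ} {z : ℤ → ℝ}
    (hz : ∀ i j : ℤ, 0 ≤ i → i ≤ j → j ≤ J → z i ≤ z j) {l : ℤ} (hl0 : -1 ≤ l) (hlJ : l ≤ J)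
    {u : ℝ}
    (hleft : 0 ≤ l → z l < u) (hright : l < J → u < z (l + 1)) :
    ∀ j ∈ Icc (0 : ℤ) J, (if l < j then (-1 : ℝ) else 1) * (u - z j) = |u - z j| := by
  intro j hj
  obtain ⟨hj0, hjJ⟩ := mem_Icc.mp hj
  split_ifs with hlj
  · have hu : u < z j := (hright (hlj.trans_le hjJ)).trans_le (hz _ _ (by omega) hlj hjJ)
    rw [abs_of_neg (sub_neg.mpr hu)]; ring
  · have hlj : j ≤ l := not_lt.mp hlj
    have hu : z j < u := (hz _ _ hj0 hlj hlJ).trans_lt (hleft (hj0.trans hlj))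
    rw [abs_of_pos (sub_pos.mpr hu), one_mul]

theorem stmt_12 (J : ℕ) (w z : ℤ → ℝ)
    (hw : ∀ j ∈ Finset.Icc (0 : ℤ) J, 0 < w j)
    (hz : ∀ i j : ℤ, 0 ≤ i → i ≤ j → j ≤ J → z i ≤ z j)
    (x lam L : ℝ) (hlam : 0 < lam) (hL : 0 < L)
    (l : ℤ) (hl0 : -1 ≤ l) (hlJ : l ≤ J)
    (s : ℝ)
    (hs : s = ∑ j ∈ Finset.Icc (0 : ℤ) J, w j * (if l < j then (-1 : ℝ) else 1))
    (hleft : 0 ≤ l → z l + (lam / L) * s < x)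
    (hright : l < J → x < z (l + 1) + (lam / L) * s) :
    (∀ v : ℝ, v ≠ x - (lam / L) * s →
      (lam / L) * ∑ j ∈ Finset.Icc (0 : ℤ) J, w j * |(x - (lam / L) * s) - z j| +
        (1 / 2) * ((x - (lam / L) * s) - x) ^ 2 <
      (lam / L) * ∑ j ∈ Finset.Icc (0 : ℤ) J, w j * |v - z j| +
        (1 / 2) * (v - x) ^ 2) ∧
    (0 ≤ l → z l < x - (lam / L) * s) ∧
    (l < J → x - (lam / L) * s < z (l + 1)) := by
  set c := lam / L
  have hc : 0 ≤ c := (div_pos hlam hL).le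
  have hbl : 0 ≤ l → z l < x - c * s := fun h => by linarith [hleft h]
  have hbr : l < J → x - c * s < z (l + 1) := fun h => by linarith [hright h]
  refine ⟨strict_prox_of_subgradient (f := fun v => c * ∑ j ∈ Icc (0 : ℤ) J, w j * |v - z j|)
    fun v => ?_, hbl, hbr⟩
  have hsub := sum_mul_abs_sub_add_le _ (fun j hj => (hw j hj).le)
    (fun _ _ => abs_ite_neg_one_one_le) (ite_mul_sub_eq_abs hz hl0 hlJ hbl hbr) v
  rw [← hs] at hsub
  calc c * ∑ j ∈ Icc (0 : ℤ) J, w j * |x - c * s - z j| + c * s * (v - (x - c * s))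
      = c * (∑ j ∈ Icc (0 : ℤ) J, w j * |x - c * s - z j| + s * (v - (x - c * s))) := by ring
    _ ≤ c * ∑ j ∈ Icc (0 : ℤ) J, w j * |v - z j| := mul_le_mul_of_nonneg_left hsub hc
end

section
/- Let w_0, …, w_J > 0 with ∑_{j=0}^J w_j = 1, λ, L > 0, reals z_0 ≤ … ≤ z_J, x ∈ ℝ, and l ∈ {0,…,J} with |x - z_l| ≤ λ/L. Then for all v ∈ ℝ: (λ/L)·∑_{j=0}^J w_j·|v - z_j| + (1/2)(v - x)² ≥ |v - z_l|·(λ/L - |x - z_l|) + (1/2)(v - z_l)² - (λ/L)·∑_{j=0}^J w_j·|z_j - z_l| + (1/2)(x - z_l)². -/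
open Finset

theorem abs_sub_le_sum_mul_abs_sub_add_sum_mul_abs_sub {ι : Type*} (s : Finset ι) (w z : ι → ℝ)
    (hw : ∀ j ∈ s, 0 ≤ w j) (hwsum : ∑ j ∈ s, w j = 1) (v c : ℝ) :
    |v - c| ≤ ∑ j ∈ s, w j * |v - z j| + ∑ j ∈ s, w j * |z j - c| := calc
  |v - c| = ∑ j ∈ s, w j * |v - c| := by rw [← sum_mul, hwsum, one_mul]
  _ ≤ ∑ j ∈ s, w j * (|v - z j| + |z j - c|) :=
    sum_le_sum fun j hj => mul_le_mul_of_nonneg_left (abs_sub_le v (z j) c) (hw j hj)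
  _ = ∑ j ∈ s, w j * |v - z j| + ∑ j ∈ s, w j * |z j - c| := by
    simp only [mul_add, sum_add_distrib]

theorem stmt_13_general (J : ℕ) (w z : Fin (J + 1) → ℝ)
    (hw : ∀ j, 0 < w j) (hwsum : ∑ j, w j = 1)
    (x lam L : ℝ)
    (l : Fin (J + 1)) (hl : |x - z l| ≤ lam / L) :
    ∀ v : ℝ,
      (lam / L) * ∑ j, w j * |v - z j| + (1 / 2) * (v - x) ^ 2 ≥
        |v - z l| * (lam / L - |x - z l|) + (1 / 2) * (v - z l) ^ 2 -
          (lam / L) * ∑ j, w j * |z j - z l| + (1 / 2) * (x - z l) ^ 2 := by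
  intro v
  have hscale : 0 ≤ lam / L := (abs_nonneg _).trans hl
  have haverage := abs_sub_le_sum_mul_abs_sub_add_sum_mul_abs_sub univ w z
    (fun j _ => (hw j).le) hwsum v (z l)
  have hcross : (v - z l) * (x - z l) ≤ |v - z l| * |x - z l| :=
    abs_mul (v - z l) (x - z l) ▸ le_abs_self _
  -- expand `(v - x) ^ 2 = ((v - z l) - (x - z l)) ^ 2` and use `hcross` on the middle term
  nlinarith [mul_le_mul_of_nonneg_left haverage hscale]

theorem stmt_13 (J : ℕ) (w z : Fin (J + 1) → ℝ)
    (hw : ∀ j, 0 < w j) (hwsum : ∑ j, w j = 1)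
    (hz : Monotone z)
    (x lam L : ℝ) (hlam : 0 < lam) (hL : 0 < L)
    (l : Fin (J + 1)) (hl : |x - z l| ≤ lam / L) :
    ∀ v : ℝ,
      (lam / L) * ∑ j, w j * |v - z j| + (1 / 2) * (v - x) ^ 2 ≥
        |v - z l| * (lam / L - |x - z l|) + (1 / 2) * (v - z l) ^ 2 -
          (lam / L) * ∑ j, w j * |z j - z l| + (1 / 2) * (x - z l) ^ 2 :=
  stmt_13_general J w z hw hwsum x lam L l hl
end
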